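/- arXiv:2307.01049 — 2 statements merged into one kernel-verified Lean document; each statement's English description precedes it below -/
import Mathlib

section
/- First-order L² stability of the efficient score in the nuisance parameters. Let v̂ = (p̂_δ, q̂_δ, F̂_a, ĝ_a) be measurable plug-in nuisance functions satisfying the same overlap bands as the truth (ε₁ ≤ p̂_δ ≤ 1−ε₁, ε₂ ≤ q̂_δ ≤ 1−ε₂ a.s., 0 ≤ F̂_a, ĝ_a ≤ 1), and suppose each component difference has L²(P)-norm at most δ: ‖p̂_{d'}(X)−p_{d'}(X)‖_{P,2} ≤ δ, ‖q̂_d(M,X)−q_d(M,X)‖_{P,2} ≤ δ, ‖F̂_a(d,M,X)−F_a(d,M,X)‖_{P,2} ≤ δ, ‖ĝ_a(d',X)−g_a(d',X)‖_{P,2} ≤ δ. Then there exists a constant C depending only on ε₁ and ε₂ (and not on δ, a, or the distribution P) such that ‖ψ_{d,d',a}(v̂) − ψ_{d,d',a}(v⁰)‖_{P,2} ≤ C·δ, where ψ_{d,d',a}(v) denotes the efficient score evaluated at nuisance functions v. -/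
/-!
On the overlap region the score is a Lipschitz function of the nuisance values, with constant
`2 / (ε₁ ε₂)²`, once `q_{d'}` is written as `1 - q_d`: every term is a quotient whose denominator
is at least `ε₁ ε₂` and whose numerator and denominator are bounded by one. For the truth the
identity `q_0 + q_1 = 1` holds almost surely because the two conditional expectations add up to
that of the constant `1`. Minkowski's inequality turns the pointwise bound into the `L²` bound
with `C = 8 / (ε₁ ε₂)²`.
-/

open MeasureTheory Set

section
variable {Ω ι E F : Type*} [MeasurableSpace Ω] {μ : Measure Ω} {p : ENNReal}
  [NormedAddCommGroup E] [NormedAddCommGroup F] [Fintype ι]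

theorem eLpNorm_le_of_ae_norm_le_sum {f : ι → Ω → E} {h : Ω → F} {K δ : ℝ} (hK : 0 ≤ K)
    (hp : 1 ≤ p) (hf : ∀ i, AEStronglyMeasurable (f i) μ)
    (hfδ : ∀ i, eLpNorm (f i) p μ ≤ ENNReal.ofReal δ)
    (hh : ∀ᵐ ω ∂μ, ‖h ω‖ ≤ K * ∑ i, ‖f i ω‖) :
    eLpNorm h p μ ≤ ENNReal.ofReal (Fintype.card ι * K * δ) := by
  calc eLpNorm h p μ ≤ eLpNorm (K • ∑ i, fun ω => ‖f i ω‖) p μ :=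
        eLpNorm_mono_ae_real (by simpa only [Pi.smul_apply, Finset.sum_apply, smul_eq_mul] using hh)
    _ ≤ ENNReal.ofReal K * ∑ i, eLpNorm (fun ω => ‖f i ω‖) p μ := by
        rw [eLpNorm_const_smul, Real.enorm_eq_ofReal hK]
        exact mul_le_mul_right (eLpNorm_sum_le (fun i _ => (hf i).norm) hp) _
    _ ≤ ENNReal.ofReal K * ∑ _i : ι, ENNReal.ofReal δ := by
        simp only [eLpNorm_norm]
        exact mul_le_mul_right (Finset.sum_le_sum fun i _ => hfδ i) _
    _ = ENNReal.ofReal (Fintype.card ι * K * δ) := by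
        rw [Finset.sum_const, Finset.card_univ, nsmul_eq_mul, mul_left_comm,
          ← ENNReal.ofReal_mul hK, ← ENNReal.ofReal_natCast,
          ← ENNReal.ofReal_mul (by positivity), mul_assoc]
end

theorem ae_add_eq_one_of_ae_eq_condExp_ite {Ω : Type*} {m mΩ : MeasurableSpace Ω} {μ : Measure Ω}
    [IsFiniteMeasure μ] (hm : m ≤ mΩ) {D : Ω → ℕ} (hD : Measurable D) (hD1 : ∀ ω, D ω ≤ 1)
    {u : ℕ → Ω → ℝ} (hu : ∀ k ≤ 1, u k =ᵐ[μ] μ[fun ω => if D ω = k then (1:ℝ) else 0 | m]) :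
    ∀ᵐ ω ∂μ, u 0 ω + u 1 ω = 1 := by
  have hint : ∀ k, Integrable (fun ω => if D ω = k then (1:ℝ) else 0) μ := fun k =>
    (integrable_const (1:ℝ)).mono'
      ((Measurable.ite (hD (measurableSet_singleton k)) measurable_const
        measurable_const).aestronglyMeasurable)
      (ae_of_all _ fun ω => by split_ifs <;> simp)
  have hsum : (fun ω => if D ω = 0 then (1:ℝ) else 0) + (fun ω => if D ω = 1 then (1:ℝ) else 0)
      = fun _ => 1 := by
    funext ω
    rcases Nat.le_one_iff_eq_zero_or_eq_one.mp (hD1 ω) with h | h <;> simp [h]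
  have hcond := (condExp_add (hint 0) (hint 1) m).symm
  rw [hsum, condExp_const hm] at hcond
  filter_upwards [hu 0 zero_le_one, hu 1 le_rfl, hcond] with ω h0 h1 h
  rw [h0, h1]
  exact h

theorem abs_mul_sub_mul_le {a b a' b' : ℝ} (hb : |b| ≤ 1) (ha' : |a'| ≤ 1) :
    |a * b - a' * b'| ≤ |a - a'| + |b - b'| := by
  calc |a * b - a' * b'| = |(a - a') * b + a' * (b - b')| := by ring_nf
    _ ≤ |a - a'| * |b| + |a'| * |b - b'| := by
        rw [← abs_mul, ← abs_mul]; exact abs_add_le _ _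
    _ ≤ |a - a'| + |b - b'| := by
        gcongr
        · exact mul_le_of_le_one_right (abs_nonneg _) hb
        · exact mul_le_of_le_one_left (abs_nonneg _) ha'

theorem abs_div_sub_div_le {a b a' b' e : ℝ} (he : 0 < e) (hb : e ≤ b) (hb' : e ≤ b')
    (ha' : |a'| ≤ 1) (hb'1 : |b'| ≤ 1) :
    |a / b - a' / b'| ≤ (|a - a'| + |b - b'|) / e ^ 2 := by
  have hb0 : 0 < b := he.trans_le hb
  have hb'0 : 0 < b' := he.trans_le hb'
  calc |a / b - a' / b'| = |a * b' - a' * b| / (b * b') := by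
        rw [div_sub_div _ _ hb0.ne' hb'0.ne', abs_div, abs_of_pos (mul_pos hb0 hb'0), mul_comm b a']
    _ ≤ (|a - a'| + |b' - b|) / (b * b') := by gcongr; exact abs_mul_sub_mul_le hb'1 ha'
    _ ≤ (|a - a'| + |b - b'|) / e ^ 2 := by
        rw [abs_sub_comm b']; gcongr; rw [sq]; gcongr

theorem abs_weightedResidual_sub_le {ε₁ ε₂ y p q F p' q' F' : ℝ} (hε₁ : 0 < ε₁) (hε₂ : 0 < ε₂)
    (hy : y ∈ Icc 0 1) (hp : p ∈ Icc ε₁ 1) (hq : q ∈ Icc ε₂ 1) (hF : F ∈ Icc 0 1)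
    (hp' : ε₁ ≤ p') (hq' : q' ∈ Icc ε₂ 1) (hF' : F' ∈ Icc 0 1) :
    |(1 - q') * (y - F') / (p' * q') - (1 - q) * (y - F) / (p * q)|
      ≤ (|p' - p| + 2 * |q' - q| + |F' - F|) / (ε₁ * ε₂) ^ 2 := by
  have hN : |(1 - q') * (y - F') - (1 - q) * (y - F)| ≤ |q' - q| + |F' - F| := by
    have h := abs_mul_sub_mul_le (a := 1 - q') (b := y - F') (a' := 1 - q) (b' := y - F)
      (abs_le.2 ⟨by linarith [hF'.2, hy.1], by linarith [hF'.1, hy.2]⟩)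
      (abs_le.2 ⟨by linarith [hq.2], by linarith [hq.1]⟩)
    rwa [sub_sub_sub_cancel_left, sub_sub_sub_cancel_left, abs_sub_comm q, abs_sub_comm F] at h
  have hD : |p' * q' - p * q| ≤ |p' - p| + |q' - q| :=
    abs_mul_sub_mul_le (abs_le.2 ⟨by linarith [hq'.1], hq'.2⟩)
      (abs_le.2 ⟨by linarith [hp.1], hp.2⟩)
  have hNtrue : |(1 - q) * (y - F)| ≤ 1 := by
    rw [abs_mul]
    exact mul_le_one₀ (abs_le.2 ⟨by linarith [hq.2], by linarith [hq.1]⟩) (abs_nonneg _)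
      (abs_le.2 ⟨by linarith [hF.2, hy.1], by linarith [hF.1, hy.2]⟩)
  have hDtrue : |p * q| ≤ 1 := by
    rw [abs_mul]
    exact mul_le_one₀ (abs_le.2 ⟨by linarith [hp.1], hp.2⟩) (abs_nonneg _)
      (abs_le.2 ⟨by linarith [hq.1], hq.2⟩)
  refine (abs_div_sub_div_le (mul_pos hε₁ hε₂) (mul_le_mul hp' hq'.1 hε₂.le (hε₁.le.trans hp'))
    (mul_le_mul hp.1 hq.1 hε₂.le (hε₁.le.trans hp.1)) hNtrue hDtrue).trans ?_
  exact div_le_div_of_nonneg_right (by linarith) (by positivity)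

-- The score `ψ_{d,d',a}` at one point, with `i = 1{D = d}`, `j = 1{D = d'}`, `y = Y_a`, and
-- `q_{d'}` written as `1 - q_d`.
noncomputable def scoreValue (i j y p q F g : ℝ) : ℝ :=
  i * (1 - q) / (p * q) * (y - F) + j / p * (F - g) + g

theorem abs_scoreValue_sub_le {ε₁ ε₂ i j y p q F g p' q' F' g' : ℝ} (hε₁ : 0 < ε₁)
    (hε₂ : 0 < ε₂) (hi : |i| ≤ 1) (hj : |j| ≤ 1) (hy : y ∈ Icc 0 1) (hp : p ∈ Icc ε₁ 1)
    (hq : q ∈ Icc ε₂ 1) (hF : F ∈ Icc 0 1) (hg : g ∈ Icc 0 1) (hp' : ε₁ ≤ p')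
    (hq' : q' ∈ Icc ε₂ 1) (hF' : F' ∈ Icc 0 1) :
    |scoreValue i j y p' q' F' g' - scoreValue i j y p q F g|
      ≤ 2 / (ε₁ * ε₂) ^ 2 * (|p' - p| + |q' - q| + |F' - F| + |g' - g|) := by
  set e := ε₁ * ε₂
  have he : 0 < e := mul_pos hε₁ hε₂
  have he_le : ∀ {x}, ε₁ ≤ x → e ≤ x := fun hx =>
    (mul_le_of_le_one_right hε₁.le (hq.1.trans hq.2)).trans hx
  have he1 : e ^ 2 ≤ 1 := pow_le_one₀ he.le ((he_le hp.1).trans hp.2)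
  have hN₂ : |(F' - g') - (F - g)| ≤ |F' - F| + |g' - g| := by
    rw [sub_sub_sub_comm]; exact abs_sub _ _
  have hT₂ : |(F' - g') / p' - (F - g) / p| ≤ (|(F' - g') - (F - g)| + |p' - p|) / e ^ 2 :=
    abs_div_sub_div_le he (he_le hp') (he_le hp.1)
      (abs_le.2 ⟨by linarith [hF.1, hg.2], by linarith [hF.2, hg.1]⟩)
      (abs_le.2 ⟨by linarith [hp.1], hp.2⟩)
  have hdecomp : scoreValue i j y p' q' F' g' - scoreValue i j y p q F g
      = i * ((1 - q') * (y - F') / (p' * q') - (1 - q) * (y - F) / (p * q))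
        + j * ((F' - g') / p' - (F - g) / p) + (g' - g) := by
    unfold scoreValue; ring
  rw [hdecomp]
  calc _ ≤ |i * ((1 - q') * (y - F') / (p' * q') - (1 - q) * (y - F) / (p * q))|
        + |j * ((F' - g') / p' - (F - g) / p)| + |g' - g| := abs_add_three _ _ _
    _ ≤ |(1 - q') * (y - F') / (p' * q') - (1 - q) * (y - F) / (p * q)|
        + |(F' - g') / p' - (F - g) / p| + |g' - g| := by
      rw [abs_mul, abs_mul]
      gcongr
      · exact mul_le_of_le_one_left (abs_nonneg _) hi
      · exact mul_le_of_le_one_left (abs_nonneg _) hj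
    _ ≤ (|p' - p| + 2 * |q' - q| + |F' - F|) / e ^ 2
        + ((|F' - F| + |g' - g|) + |p' - p|) / e ^ 2 + |g' - g| / e ^ 2 := by
      gcongr
      · exact abs_weightedResidual_sub_le hε₁ hε₂ hy hp hq hF hp' hq' hF'
      · exact hT₂.trans (by gcongr)
      · exact le_div_self (abs_nonneg _) (by positivity) he1
    _ = 2 / e ^ 2 * (|p' - p| + |q' - q| + |F' - F| + |g' - g|) := by ring

theorem apply_one_sub_eq_one_sub {u : ℕ → ℝ} (hu : u 0 + u 1 = 1) {d : ℕ} (hd : d ≤ 1) :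
    u (1 - d) = 1 - u d := by
  interval_cases d <;> simp <;> linarith

/-- First-order L² stability of the efficient score in the nuisance
parameters: there is a constant `C` depending only on `ε₁, ε₂` (and not on `δ`, `a`, or the
distribution `P`) such that if each plug-in nuisance component is within `δ` of the truth in
`L²(P)` (and respects the overlap bands), then
`‖ψ_{d,d',a}(v̂) − ψ_{d,d',a}(v⁰)‖_{P,2} ≤ C·δ`. -/
theorem statement_13
    (ε₁ ε₂ : ℝ) (hε₁ : ε₁ ∈ Set.Ioo (0:ℝ) (1/2)) (hε₂ : ε₂ ∈ Set.Ioo (0:ℝ) (1/2)) :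
    ∃ C : ℝ, 0 < C ∧
      ∀ (Ω : Type u) (𝓜 : Type v) (𝓧 : Type w)
        [MeasurableSpace Ω] [MeasurableSpace 𝓜] [Countable 𝓜]
        [MeasurableSingletonClass 𝓜] [MeasurableSpace 𝓧]
        (P : Measure Ω) [IsProbabilityMeasure P]
        (Y : Ω → ℝ) (D : Ω → ℕ) (M : Ω → 𝓜) (X : Ω → 𝓧),
        Measurable Y → Measurable D → Measurable M → Measurable X →
        (∀ ω, D ω ≤ 1) →
        ∀ (a : ℝ) (d d' : ℕ), d ≤ 1 → d' = 1 - d →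
        -- true nuisance parameters
        ∀ (p : ℕ → 𝓧 → ℝ) (q : ℕ → 𝓜 → 𝓧 → ℝ) (F : ℕ → 𝓜 → 𝓧 → ℝ) (g : ℕ → 𝓧 → ℝ),
        Measurable (fun t : ℕ × 𝓧 => p t.1 t.2) →
        Measurable (fun t : ℕ × 𝓜 × 𝓧 => q t.1 t.2.1 t.2.2) →
        Measurable (fun t : ℕ × 𝓜 × 𝓧 => F t.1 t.2.1 t.2.2) →
        Measurable (fun t : ℕ × 𝓧 => g t.1 t.2) →
        (∀ δ ≤ 1, (fun ω => p δ (X ω)) =ᵐ[P]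
          P[(fun ω' => if D ω' = δ then (1:ℝ) else 0) |
            MeasurableSpace.comap X inferInstance]) →
        (∀ δ ≤ 1, (fun ω => q δ (M ω) (X ω)) =ᵐ[P]
          P[(fun ω' => if D ω' = δ then (1:ℝ) else 0) |
            MeasurableSpace.comap (fun ω' => (M ω', X ω')) inferInstance]) →
        ((fun ω => F (D ω) (M ω) (X ω)) =ᵐ[P]
          P[(fun ω' => if Y ω' ≤ a then (1:ℝ) else 0) |
            MeasurableSpace.comap (fun ω' => (D ω', M ω', X ω')) inferInstance]) →
        ((fun ω => g (D ω) (X ω)) =ᵐ[P]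
          P[(fun ω' => F d (M ω') (X ω')) |
            MeasurableSpace.comap (fun ω' => (D ω', X ω')) inferInstance]) →
        -- overlap bands for the truth
        (∀ δ ≤ 1, ∀ᵐ ω ∂P, ε₁ ≤ p δ (X ω) ∧ p δ (X ω) ≤ 1 - ε₁) →
        (∀ δ ≤ 1, ∀ᵐ ω ∂P, ε₂ ≤ q δ (M ω) (X ω) ∧ q δ (M ω) (X ω) ≤ 1 - ε₂) →
        (∀ᵐ ω ∂P, F d (M ω) (X ω) ∈ Set.Icc (0:ℝ) 1 ∧ g d' (X ω) ∈ Set.Icc (0:ℝ) 1) →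
        -- plug-in nuisance parameters, with the same overlap bands
        ∀ (phat : ℕ → 𝓧 → ℝ) (qhat : ℕ → 𝓜 → 𝓧 → ℝ)
          (Fhat : ℕ → 𝓜 → 𝓧 → ℝ) (ghat : ℕ → 𝓧 → ℝ),
        Measurable (fun t : ℕ × 𝓧 => phat t.1 t.2) →
        Measurable (fun t : ℕ × 𝓜 × 𝓧 => qhat t.1 t.2.1 t.2.2) →
        Measurable (fun t : ℕ × 𝓜 × 𝓧 => Fhat t.1 t.2.1 t.2.2) →
        Measurable (fun t : ℕ × 𝓧 => ghat t.1 t.2) →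
        (∀ δ ≤ 1, ∀ᵐ ω ∂P, ε₁ ≤ phat δ (X ω) ∧ phat δ (X ω) ≤ 1 - ε₁) →
        (∀ δ ≤ 1, ∀ᵐ ω ∂P, ε₂ ≤ qhat δ (M ω) (X ω) ∧ qhat δ (M ω) (X ω) ≤ 1 - ε₂) →
        (∀ m x, qhat 0 m x + qhat 1 m x = 1) →
        (∀ᵐ ω ∂P, Fhat d (M ω) (X ω) ∈ Set.Icc (0:ℝ) 1
            ∧ ghat d' (X ω) ∈ Set.Icc (0:ℝ) 1) →
        -- L² accuracy of each component
        ∀ δ : ℝ, 0 ≤ δ →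
        eLpNorm (fun ω => phat d' (X ω) - p d' (X ω)) 2 P ≤ ENNReal.ofReal δ →
        eLpNorm (fun ω => qhat d (M ω) (X ω) - q d (M ω) (X ω)) 2 P ≤ ENNReal.ofReal δ →
        eLpNorm (fun ω => Fhat d (M ω) (X ω) - F d (M ω) (X ω)) 2 P ≤ ENNReal.ofReal δ →
        eLpNorm (fun ω => ghat d' (X ω) - g d' (X ω)) 2 P ≤ ENNReal.ofReal δ →
        eLpNorm (fun ω =>
          ((if D ω = d then (1:ℝ) else 0) * qhat d' (M ω) (X ω)
              / (phat d' (X ω) * qhat d (M ω) (X ω))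
              * ((if Y ω ≤ a then (1:ℝ) else 0) - Fhat d (M ω) (X ω))
            + (if D ω = d' then (1:ℝ) else 0) / phat d' (X ω)
              * (Fhat d (M ω) (X ω) - ghat d' (X ω))
            + ghat d' (X ω))
          - ((if D ω = d then (1:ℝ) else 0) * q d' (M ω) (X ω)
              / (p d' (X ω) * q d (M ω) (X ω))
              * ((if Y ω ≤ a then (1:ℝ) else 0) - F d (M ω) (X ω))
            + (if D ω = d' then (1:ℝ) else 0) / p d' (X ω)
              * (F d (M ω) (X ω) - g d' (X ω))
            + g d' (X ω))) 2 P ≤ ENNReal.ofReal (C * δ) := by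
  have hε₁0 := hε₁.1
  have hε₂0 := hε₂.1
  refine ⟨4 * (2 / (ε₁ * ε₂) ^ 2), by positivity, ?_⟩
  intro Ω 𝓜 𝓧 _ _ _ _ _ P _ Y D M X _ hD hM hX hD1 a d d' hd hd' p q F g hpm hqm hFm hgm _ hqc _ _
    hpband hqband hFg phat qhat Fhat ghat hphm hqhm hFhm hghm hphband hqhband hqhsum hFgh
    δ _ hδp hδq hδF hδg
  subst hd'
  have hqsum := ae_add_eq_one_of_ae_eq_condExp_ite (hM.prodMk hX).comap_le hD hD1
    (u := fun k ω => q k (M ω) (X ω)) hqc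
  have hXm : ∀ k : ℕ, Measurable fun ω => (k, X ω) := fun _ => measurable_const.prodMk hX
  have hMXm : ∀ k : ℕ, Measurable fun ω => (k, M ω, X ω) :=
    fun _ => measurable_const.prodMk (hM.prodMk hX)
  refine (eLpNorm_le_of_ae_norm_le_sum (K := 2 / (ε₁ * ε₂) ^ 2) (δ := δ) (by positivity) one_le_two
    (f := ![fun ω => phat (1 - d) (X ω) - p (1 - d) (X ω),
      fun ω => qhat d (M ω) (X ω) - q d (M ω) (X ω),
      fun ω => Fhat d (M ω) (X ω) - F d (M ω) (X ω),
      fun ω => ghat (1 - d) (X ω) - g (1 - d) (X ω)]) ?_ ?_ ?_).trans_eq ?_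
  · intro i
    fin_cases i
    · exact ((hphm.comp (hXm _)).sub (hpm.comp (hXm _))).aestronglyMeasurable
    · exact ((hqhm.comp (hMXm _)).sub (hqm.comp (hMXm _))).aestronglyMeasurable
    · exact ((hFhm.comp (hMXm _)).sub (hFm.comp (hMXm _))).aestronglyMeasurable
    · exact ((hghm.comp (hXm _)).sub (hgm.comp (hXm _))).aestronglyMeasurable
  · intro i
    fin_cases i <;> assumption
  · filter_upwards [hqsum, hpband (1 - d) (Nat.sub_le _ _), hqband d hd, hFg,
      hphband (1 - d) (Nat.sub_le _ _), hqhband d hd, hFgh] with ω hqω hpω hqdω hFgω hphω hqhω hFghω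
    have hq' : q (1 - d) (M ω) (X ω) = 1 - q d (M ω) (X ω) :=
      apply_one_sub_eq_one_sub (u := fun k => q k (M ω) (X ω)) hqω hd
    have hqh' : qhat (1 - d) (M ω) (X ω) = 1 - qhat d (M ω) (X ω) :=
      apply_one_sub_eq_one_sub (u := fun k => qhat k (M ω) (X ω)) (hqhsum _ _) hd
    simp only [Fin.sum_univ_four, Real.norm_eq_abs, Matrix.cons_val_zero, Matrix.cons_val_one,
      Matrix.cons_val_two, Matrix.cons_val_three]
    rw [hq', hqh']
    exact abs_scoreValue_sub_le hε₁0 hε₂0 (by split_ifs <;> simp) (by split_ifs <;> simp)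
      (by split_ifs <;> simp) ⟨hpω.1, by linarith [hpω.2]⟩ ⟨hqdω.1, by linarith [hqdω.2]⟩
      hFgω.1 hFgω.2 hphω.1 ⟨hqhω.1, by linarith [hqhω.2]⟩ hFghω.1
  · simp [mul_assoc]
end

section
/- Smoothness of the efficient score in the threshold a (case d ≠ d'): for all thresholds a, ā ∈ ℝ, ‖ψ_{d,d',a} − ψ_{d,d',ā}‖_{P,2} ≤ ( 2(1−ε₂)/(ε₁ε₂) + 1/ε₁ + (1+ε₁)/ε₁ ) · ‖Y_a − Y_ā‖_{P,2}, where ψ_{d,d',a} is the efficient score at the true nuisance parameters evaluated at threshold a (with F_a and g_a replaced by F_ā and g_ā in ψ_{d,d',ā}). -/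
/-!
Write `ΔY = Y_a - Y_ā`, `ΔF = F_a(d,M,X) - F_ā(d,M,X)` and `Δg = g_a(d',X) - g_ā(d',X)`.
Since `D ∈ {d, d'}`, the difference of the two scores is
`W₁ (ΔY - E[ΔY | D,M,X]) + W₂ (ΔF - E[ΔF | D,X]) + Δg`, with the bounded weights
`W₁ = 1{D=d} q_{d'}/(p_{d'} q_d) ≤ (1-ε₂)/(ε₁ε₂)` and `W₂ = 1{D=d'}/p_{d'} ≤ 1/ε₁`.
Pulling a bounded weight into the conditional expectation, each weighted residual has `L²` norm
at most the weight bound times the norm of what is regressed. For the regressions themselves,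
`ΔF` is a function of `(M,X)` that agrees with `E[ΔY | D,M,X]` on `{D = d}`, an event of
conditional probability `q_d ≥ ε₂` given `(M,X)`; hence `ε₂ ‖ΔF‖² ≤ ‖1{D=d} ΔF‖² ≤ ‖ΔY‖²`.
In the same way `ε₁ ‖Δg‖² ≤ ‖ΔF‖²`. The same change of measure shows that `F_t(d,M,X)` and
`g_t(d',X)`, which the versions only pin down on `{D = d}` and `{D = d'}`, are a.s. bounded by 1.
Adding up gives the constant `(1-ε₂)/(ε₁ε₂) + 1/(ε₁√ε₂) + 1/√(ε₁ε₂)`, which is at most the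
one claimed.
-/

open MeasureTheory

section ConditionalExpectationL2

variable {Ω : Type*} {m m0 : MeasurableSpace Ω} {μ : Measure Ω}

theorem MeasureTheory.MemLp.eLpNorm_two_eq_sqrt_integral_sq {f : Ω → ℝ} (hf : MemLp f 2 μ) :
    eLpNorm f 2 μ = ENNReal.ofReal √(∫ ω, f ω ^ 2 ∂μ) := by
  rw [hf.eLpNorm_eq_integral_rpow_norm two_ne_zero ENNReal.ofNat_ne_top, Real.sqrt_eq_rpow]
  norm_num [Real.norm_eq_abs]

theorem eLpNorm_two_le_ofReal_mul_of_integral_sq_le {f g : Ω → ℝ} (hf : MemLp f 2 μ)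
    (hg : MemLp g 2 μ) {c : ℝ} (hc : 0 ≤ c)
    (h : ∫ ω, f ω ^ 2 ∂μ ≤ c ^ 2 * ∫ ω, g ω ^ 2 ∂μ) :
    eLpNorm f 2 μ ≤ ENNReal.ofReal c * eLpNorm g 2 μ := by
  rw [hf.eLpNorm_two_eq_sqrt_integral_sq, hg.eLpNorm_two_eq_sqrt_integral_sq,
    ← ENNReal.ofReal_mul hc, ← Real.sqrt_sq hc, ← Real.sqrt_mul (sq_nonneg c)]
  exact ENNReal.ofReal_le_ofReal (Real.sqrt_le_sqrt h)

theorem ae_imp_sub_eq_condExp_sub {A : Set Ω} {u₁ u₂ f₁ f₂ : Ω → ℝ}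
    (h₁ : ∀ᵐ ω ∂μ, ω ∈ A → u₁ ω = μ[f₁|m] ω) (h₂ : ∀ᵐ ω ∂μ, ω ∈ A → u₂ ω = μ[f₂|m] ω)
    (hf₁ : Integrable f₁ μ) (hf₂ : Integrable f₂ μ) :
    ∀ᵐ ω ∂μ, ω ∈ A → u₁ ω - u₂ ω = μ[f₁ - f₂|m] ω := by
  filter_upwards [h₁, h₂, condExp_sub hf₁ hf₂ m] with ω hω₁ hω₂ hsub hωA
  rw [hω₁ hωA, hω₂ hωA, hsub, Pi.sub_apply]

theorem ae_le_condExp_indicator_of_ae_eq {β : Type*} [DecidableEq β] {D : Ω → β} {δ : β}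
    {ρ : Ω → ℝ} (hρ : ρ =ᵐ[μ] μ[fun ω => if D ω = δ then 1 else 0|m]) {ε : ℝ}
    (hε : ∀ᵐ ω ∂μ, ε ≤ ρ ω) : ∀ᵐ ω ∂μ, ε ≤ μ[{ω | D ω = δ}.indicator 1|m] ω := by
  have hind : {ω | D ω = δ}.indicator (1 : Ω → ℝ) = fun ω => if D ω = δ then 1 else 0 := by
    ext ω; simp [Set.indicator_apply]
  filter_upwards [hρ, hε] with ω hρω hεω
  rwa [hind, ← hρω]

variable [IsFiniteMeasure μ]

theorem integral_mul_condExp_self (hm : m ≤ m0) {f : Ω → ℝ} (hf : MemLp f 2 μ) :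
    ∫ ω, f ω * μ[f|m] ω ∂μ = ∫ ω, μ[f|m] ω ^ 2 ∂μ := by
  have hE : MemLp (μ[f|m]) 2 μ := hf.condExp one_le_two
  calc ∫ ω, f ω * μ[f|m] ω ∂μ = ∫ ω, μ[μ[f|m] * f|m] ω ∂μ := by
        rw [integral_condExp hm]; simp only [Pi.mul_apply, mul_comm]
    _ = ∫ ω, (μ[f|m] * μ[f|m]) ω ∂μ :=
        integral_congr_ae (condExp_mul_of_stronglyMeasurable_left stronglyMeasurable_condExp
          (hE.integrable_mul hf) (hf.integrable one_le_two))
    _ = ∫ ω, μ[f|m] ω ^ 2 ∂μ := by simp only [Pi.mul_apply, sq]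

theorem eLpNorm_sub_condExp_le (hm : m ≤ m0) {f : Ω → ℝ} (hf : MemLp f 2 μ) :
    eLpNorm (f - μ[f|m]) 2 μ ≤ eLpNorm f 2 μ := by
  have hE : MemLp (μ[f|m]) 2 μ := hf.condExp one_le_two
  have hpythagoras :
      ∫ ω, (f - μ[f|m]) ω ^ 2 ∂μ = ∫ ω, f ω ^ 2 ∂μ - ∫ ω, μ[f|m] ω ^ 2 ∂μ := by
    have hexpand : (fun ω => (f - μ[f|m]) ω ^ 2)
        = fun ω => f ω ^ 2 - 2 * (f ω * μ[f|m] ω) + μ[f|m] ω ^ 2 := by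
      funext ω; simp only [Pi.sub_apply]; ring
    have hcross : Integrable (fun ω => 2 * (f ω * μ[f|m] ω)) μ :=
      (hf.integrable_mul hE).const_mul 2
    have hsub : Integrable (fun ω => f ω ^ 2 - 2 * (f ω * μ[f|m] ω)) μ :=
      hf.integrable_sq.sub hcross
    rw [hexpand, integral_add hsub hE.integrable_sq, integral_sub hf.integrable_sq hcross,
      integral_const_mul, integral_mul_condExp_self hm hf]
    ring
  have hE2 : 0 ≤ ∫ ω, μ[f|m] ω ^ 2 ∂μ := integral_nonneg fun ω => sq_nonneg _
  simpa using eLpNorm_two_le_ofReal_mul_of_integral_sq_le (hf.sub hE) hf zero_le_one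
    (by rw [hpythagoras, one_pow, one_mul]; linarith)

theorem eLpNorm_mul_sub_condExp_le (hm : m ≤ m0) {w f : Ω → ℝ} (hw : StronglyMeasurable[m] w)
    {C : ℝ} (hwC : ∀ᵐ ω ∂μ, |w ω| ≤ C) (hf : MemLp f 2 μ) :
    eLpNorm (w * (f - μ[f|m])) 2 μ ≤ ENNReal.ofReal C * eLpNorm f 2 μ := by
  have hwf_le : ∀ᵐ ω ∂μ, ‖(w * f) ω‖ ≤ C * ‖f ω‖ := by
    filter_upwards [hwC] with ω hω
    simpa [abs_mul] using mul_le_mul_of_nonneg_right hω (abs_nonneg (f ω))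
  have hwf : MemLp (w * f) 2 μ :=
    hf.of_le_mul ((hw.mono hm).aestronglyMeasurable.mul hf.1) hwf_le
  have hpull : w * (f - μ[f|m]) =ᵐ[μ] w * f - μ[w * f|m] := by
    filter_upwards [condExp_mul_of_stronglyMeasurable_left hw (hwf.integrable one_le_two)
      (hf.integrable one_le_two)] with ω hω
    simp [hω, mul_sub]
  calc eLpNorm (w * (f - μ[f|m])) 2 μ = eLpNorm (w * f - μ[w * f|m]) 2 μ :=
        eLpNorm_congr_ae hpull
    _ ≤ eLpNorm (w * f) 2 μ := eLpNorm_sub_condExp_le hm hwf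
    _ ≤ ENNReal.ofReal C * eLpNorm f 2 μ := eLpNorm_le_mul_eLpNorm_of_ae_le_mul hwf_le 2

theorem mul_integral_le_setIntegral_of_le_condExp_indicator (hm : m ≤ m0) {A : Set Ω}
    (hA : MeasurableSet A) {ε : ℝ} (hε : ∀ᵐ ω ∂μ, ε ≤ μ[A.indicator 1|m] ω) {φ : Ω → ℝ}
    (hφm : StronglyMeasurable[m] φ) (hφ0 : 0 ≤ᵐ[μ] φ) (hφ : Integrable φ μ) :
    ε * ∫ ω, φ ω ∂μ ≤ ∫ ω in A, φ ω ∂μ := by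
  have hφA : φ * A.indicator 1 = A.indicator φ := by
    ext ω; by_cases hω : ω ∈ A <;> simp [hω]
  have hpull : μ[φ * A.indicator 1|m] =ᵐ[μ] φ * μ[A.indicator 1|m] :=
    condExp_mul_of_stronglyMeasurable_left hφm (hφA ▸ hφ.indicator hA)
      ((integrable_const 1).indicator hA)
  calc ε * ∫ ω, φ ω ∂μ = ∫ ω, ε * φ ω ∂μ := (integral_const_mul ε φ).symm
    _ ≤ ∫ ω, (φ * μ[A.indicator 1|m] : Ω → ℝ) ω ∂μ := by
        refine integral_mono_ae (hφ.const_mul ε) (integrable_condExp.congr hpull) ?_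
        filter_upwards [hε, hφ0] with ω hεω hφω
        simpa [mul_comm] using mul_le_mul_of_nonneg_left hεω hφω
    _ = ∫ ω, (φ * A.indicator 1 : Ω → ℝ) ω ∂μ := by
        rw [← integral_congr_ae hpull, integral_condExp hm]
    _ = ∫ ω in A, φ ω ∂μ := by rw [hφA, integral_indicator hA]

theorem ae_of_ae_imp_of_le_condExp_indicator (hm : m ≤ m0) {A : Set Ω} (hA : MeasurableSet A)
    {ε : ℝ} (hε0 : 0 < ε) (hε : ∀ᵐ ω ∂μ, ε ≤ μ[A.indicator 1|m] ω) {p : Ω → Prop}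
    (hp : MeasurableSet[m] {ω | p ω}) (hpA : ∀ᵐ ω ∂μ, ω ∈ A → p ω) : ∀ᵐ ω ∂μ, p ω := by
  set S := {ω | p ω}ᶜ
  have hS : MeasurableSet[m] S := hp.compl
  have hSA : ∫ ω in A, S.indicator (1 : Ω → ℝ) ω ∂μ = 0 :=
    setIntegral_eq_zero_of_ae_eq_zero (hpA.mono fun ω hω hωA => by simp [S, hω hωA])
  have h := mul_integral_le_setIntegral_of_le_condExp_indicator hm hA hε
    (stronglyMeasurable_one.indicator hS) (ae_of_all _ (Set.indicator_nonneg (by simp)))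
    ((integrable_const 1).indicator (hm _ hS))
  rw [hSA, integral_indicator_one (hm _ hS)] at h
  have : μ.real S = 0 := le_antisymm (nonpos_of_mul_nonpos_right h hε0) measureReal_nonneg
  exact ae_iff.mpr ((measureReal_eq_zero_iff).mp this)

theorem ae_abs_le_of_ae_eq_condExp_on {𝓖 𝓗 : MeasurableSpace Ω} (h𝓗 : 𝓗 ≤ m0) {A : Set Ω}
    (hA : MeasurableSet[m0] A) {ε : ℝ} (hε0 : 0 < ε) (hε : ∀ᵐ ω ∂μ, ε ≤ μ[A.indicator 1|𝓗] ω)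
    {f h : Ω → ℝ} (hh : StronglyMeasurable[𝓗] h) {c : ℝ} (hfc : ∀ᵐ ω ∂μ, |f ω| ≤ c)
    (hhA : ∀ᵐ ω ∂μ, ω ∈ A → h ω = μ[f|𝓖] ω) : ∀ᵐ ω ∂μ, |h ω| ≤ c := by
  refine ae_of_ae_imp_of_le_condExp_indicator h𝓗 hA hε0 hε
    (measurableSet_le hh.measurable.abs measurable_const) ?_
  filter_upwards [hhA, ae_bdd_abs_condExp_of_ae_bdd_abs (m := 𝓖) hfc] with ω hω hc hωA
  rw [hω hωA]
  exact hc

theorem eLpNorm_le_of_ae_eq_condExp_on {𝓖 𝓗 : MeasurableSpace Ω} (h𝓖 : 𝓖 ≤ m0) (h𝓗 : 𝓗 ≤ m0)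
    {A : Set Ω} (hA : MeasurableSet[𝓖] A) {ε : ℝ} (hε0 : 0 < ε)
    (hε : ∀ᵐ ω ∂μ, ε ≤ μ[A.indicator 1|𝓗] ω) {f h : Ω → ℝ} (hf : MemLp f 2 μ)
    (hh : StronglyMeasurable[𝓗] h) (hh2 : MemLp h 2 μ)
    (hhA : ∀ᵐ ω ∂μ, ω ∈ A → h ω = μ[f|𝓖] ω) :
    eLpNorm h 2 μ ≤ ENNReal.ofReal (√ε)⁻¹ * eLpNorm f 2 μ := by
  have hA0 : MeasurableSet[m0] A := h𝓖 _ hA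
  have hchange : eLpNorm h 2 μ ≤ ENNReal.ofReal (√ε)⁻¹ * eLpNorm (A.indicator h) 2 μ := by
    refine eLpNorm_two_le_ofReal_mul_of_integral_sq_le hh2 (hh2.indicator hA0) (by positivity) ?_
    have hsq : (fun ω => A.indicator h ω ^ 2) = A.indicator fun ω => h ω ^ 2 := by
      ext ω; by_cases hω : ω ∈ A <;> simp [hω]
    rw [inv_pow, Real.sq_sqrt hε0.le, hsq, integral_indicator hA0, le_inv_mul_iff₀ hε0]
    exact mul_integral_le_setIntegral_of_le_condExp_indicator h𝓗 hA0 hε (hh.pow 2)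
      (ae_of_all _ fun ω => sq_nonneg _) hh2.integrable_sq
  have hind : A.indicator h =ᵐ[μ] μ[A.indicator f|𝓖] := by
    refine Filter.EventuallyEq.trans ?_ (condExp_indicator (hf.integrable one_le_two) hA).symm
    filter_upwards [hhA] with ω hω
    by_cases hωA : ω ∈ A <;> simp [hωA, hω]
  calc eLpNorm h 2 μ ≤ ENNReal.ofReal (√ε)⁻¹ * eLpNorm (A.indicator h) 2 μ := hchange
    _ = ENNReal.ofReal (√ε)⁻¹ * eLpNorm (μ[A.indicator f|𝓖]) 2 μ := by
        rw [eLpNorm_congr_ae hind]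
    _ ≤ ENNReal.ofReal (√ε)⁻¹ * eLpNorm (A.indicator f) 2 μ := by
        gcongr; exact eLpNorm_condExp_le_eLpNorm _ one_le_two
    _ ≤ ENNReal.ofReal (√ε)⁻¹ * eLpNorm f 2 μ := by gcongr; exact eLpNorm_indicator_le f

end ConditionalExpectationL2

section NestedRegression

variable {Ω : Type*} {m0 : MeasurableSpace Ω} {μ : Measure Ω} [IsProbabilityMeasure μ]

theorem eLpNorm_nested_residuals_le {𝓖₁ 𝓗₁ 𝓖₂ 𝓗₂ : MeasurableSpace Ω} (h𝓖₁ : 𝓖₁ ≤ m0)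
    (h𝓗₁ : 𝓗₁ ≤ m0) (h𝓖₂ : 𝓖₂ ≤ m0) (h𝓗₂ : 𝓗₂ ≤ m0) {A B : Set Ω}
    (hA : MeasurableSet[𝓖₁] A) (hB : MeasurableSet[𝓖₂] B) {ε₁ ε₂ : ℝ} (hε₁ : 0 < ε₁)
    (hε₂ : 0 < ε₂) (hεA : ∀ᵐ ω ∂μ, ε₂ ≤ μ[A.indicator 1|𝓗₁] ω)
    (hεB : ∀ᵐ ω ∂μ, ε₁ ≤ μ[B.indicator 1|𝓗₂] ω) {f h k w₁ w₂ : Ω → ℝ} (hf : MemLp f 2 μ)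
    (hh : StronglyMeasurable[𝓗₁] h) (hh2 : MemLp h 2 μ)
    (hhA : ∀ᵐ ω ∂μ, ω ∈ A → h ω = μ[f|𝓖₁] ω) (hk : StronglyMeasurable[𝓗₂] k)
    (hk2 : MemLp k 2 μ) (hkB : ∀ᵐ ω ∂μ, ω ∈ B → k ω = μ[h|𝓖₂] ω)
    (hw₁ : StronglyMeasurable[𝓖₁] w₁) (hw₂ : StronglyMeasurable[𝓖₂] w₂) {C₁ C₂ : ℝ}
    (hC₁ : ∀ᵐ ω ∂μ, |w₁ ω| ≤ C₁) (hC₂ : ∀ᵐ ω ∂μ, |w₂ ω| ≤ C₂) :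
    eLpNorm (w₁ * (f - μ[f|𝓖₁]) + w₂ * (h - μ[h|𝓖₂]) + k) 2 μ
      ≤ ENNReal.ofReal (C₁ + C₂ * (√ε₂)⁻¹ + (√ε₁)⁻¹ * (√ε₂)⁻¹) * eLpNorm f 2 μ := by
  have hC₁0 : 0 ≤ C₁ := (abs_nonneg _).trans hC₁.exists.choose_spec
  have hC₂0 : 0 ≤ C₂ := (abs_nonneg _).trans hC₂.exists.choose_spec
  have hh_le := eLpNorm_le_of_ae_eq_condExp_on h𝓖₁ h𝓗₁ hA hε₂ hεA hf hh hh2 hhA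
  have hk_le := eLpNorm_le_of_ae_eq_condExp_on h𝓖₂ h𝓗₂ hB hε₁ hεB hh2 hk hk2 hkB
  have hT₁ := eLpNorm_mul_sub_condExp_le h𝓖₁ hw₁ hC₁ hf
  have hT₂ := eLpNorm_mul_sub_condExp_le h𝓖₂ hw₂ hC₂ hh2
  have hmeas₁ : AEStronglyMeasurable[m0] (w₁ * (f - μ[f|𝓖₁])) μ :=
    (hw₁.mono h𝓖₁).aestronglyMeasurable.mul (hf.1.sub integrable_condExp.1)
  have hmeas₂ : AEStronglyMeasurable[m0] (w₂ * (h - μ[h|𝓖₂])) μ :=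
    (hw₂.mono h𝓖₂).aestronglyMeasurable.mul (hh2.1.sub integrable_condExp.1)
  calc eLpNorm (w₁ * (f - μ[f|𝓖₁]) + w₂ * (h - μ[h|𝓖₂]) + k) 2 μ
      ≤ eLpNorm (w₁ * (f - μ[f|𝓖₁])) 2 μ + eLpNorm (w₂ * (h - μ[h|𝓖₂])) 2 μ
          + eLpNorm k 2 μ :=
        (eLpNorm_add_le (hmeas₁.add hmeas₂) hk2.1 one_le_two).trans
          (by gcongr; exact eLpNorm_add_le hmeas₁ hmeas₂ one_le_two)
    _ ≤ ENNReal.ofReal C₁ * eLpNorm f 2 μ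
          + ENNReal.ofReal C₂ * (ENNReal.ofReal (√ε₂)⁻¹ * eLpNorm f 2 μ)
          + ENNReal.ofReal (√ε₁)⁻¹ * (ENNReal.ofReal (√ε₂)⁻¹ * eLpNorm f 2 μ) := by
        gcongr
        · exact hT₂.trans (by gcongr)
        · exact hk_le.trans (by gcongr)
    _ = _ := by
        rw [ENNReal.ofReal_add (by positivity) (by positivity),
          ENNReal.ofReal_add hC₁0 (by positivity),
          ENNReal.ofReal_mul hC₂0, ENNReal.ofReal_mul (by positivity)]
        ring

end NestedRegression

theorem score_constant_le {ε₁ ε₂ : ℝ} (hε₁ : 0 < ε₁) (hε₁1 : ε₁ ≤ 1) (hε₂ : 0 < ε₂) :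
    (1 - ε₂) / (ε₁ * ε₂) + 1 / ε₁ * (√ε₂)⁻¹ + (√ε₁)⁻¹ * (√ε₂)⁻¹
      ≤ 2 * (1 - ε₂) / (ε₁ * ε₂) + 1 / ε₁ + (1 + ε₁) / ε₁ := by
  obtain ⟨s, hs, rfl⟩ : ∃ s, 0 < s ∧ ε₁ = s ^ 2 :=
    ⟨√ε₁, by positivity, (Real.sq_sqrt hε₁.le).symm⟩
  obtain ⟨t, ht, rfl⟩ : ∃ t, 0 < t ∧ ε₂ = t ^ 2 :=
    ⟨√ε₂, by positivity, (Real.sq_sqrt hε₂.le).symm⟩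
  rw [Real.sqrt_sq hs.le, Real.sqrt_sq ht.le, ← sub_nonneg]
  have hs1 : s ≤ 1 := by nlinarith
  -- after multiplying by `ε₁ε₂`: `1 - ε₂ + √ε₂ + √(ε₁ε₂) ≤ 1 - ε₂ + 2√ε₂ = 2 - (1 - √ε₂)²`
  have hnum : 0 ≤ 2 + s ^ 2 * t ^ 2 - (1 - t ^ 2 + t + s * t) := by
    nlinarith [sq_nonneg (1 - t)]
  have hdiff : 2 * (1 - t ^ 2) / (s ^ 2 * t ^ 2) + 1 / s ^ 2 + (1 + s ^ 2) / s ^ 2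
      - ((1 - t ^ 2) / (s ^ 2 * t ^ 2) + 1 / s ^ 2 * t⁻¹ + s⁻¹ * t⁻¹)
      = (2 + s ^ 2 * t ^ 2 - (1 - t ^ 2 + t + s * t)) / (s ^ 2 * t ^ 2) := by
    field_simp; ring
  rw [hdiff]; positivity

section EfficientScore

variable {Ω 𝓜 𝓧 : Type*}

noncomputable def treatmentWeight (D : Ω → ℕ) (M : Ω → 𝓜) (X : Ω → 𝓧) (p : ℕ → 𝓧 → ℝ)
    (q : ℕ → 𝓜 → 𝓧 → ℝ) (d d' : ℕ) (ω : Ω) : ℝ :=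
  (if D ω = d then 1 else 0) * q d' (M ω) (X ω) / (p d' (X ω) * q d (M ω) (X ω))

noncomputable def controlWeight (D : Ω → ℕ) (X : Ω → 𝓧) (p : ℕ → 𝓧 → ℝ) (d' : ℕ) (ω : Ω) : ℝ :=
  (if D ω = d' then 1 else 0) / p d' (X ω)

noncomputable def efficientScore (Y : Ω → ℝ) (D : Ω → ℕ) (M : Ω → 𝓜) (X : Ω → 𝓧) (p : ℕ → 𝓧 → ℝ)
    (q : ℕ → 𝓜 → 𝓧 → ℝ) (F : ℝ → ℕ → 𝓜 → 𝓧 → ℝ) (g : ℝ → ℕ → 𝓧 → ℝ) (d d' : ℕ) (a : ℝ)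
    (ω : Ω) : ℝ :=
  treatmentWeight D M X p q d d' ω * ((if Y ω ≤ a then 1 else 0) - F a d (M ω) (X ω))
    + controlWeight D X p d' ω * (F a d (M ω) (X ω) - g a d' (X ω)) + g a d' (X ω)

variable {Y : Ω → ℝ} {D : Ω → ℕ} {M : Ω → 𝓜} {X : Ω → 𝓧} {p : ℕ → 𝓧 → ℝ}
  {q : ℕ → 𝓜 → 𝓧 → ℝ} {F : ℝ → ℕ → 𝓜 → 𝓧 → ℝ} {g : ℝ → ℕ → 𝓧 → ℝ} {d d' : ℕ}

theorem efficientScore_sub_efficientScore {a abar : ℝ} {ω : Ω} (hω : D ω = d ∨ D ω = d')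
    (hdd' : d ≠ d') {u₁ u₂ : ℝ}
    (h₁ : D ω = d → F a d (M ω) (X ω) - F abar d (M ω) (X ω) = u₁)
    (h₂ : D ω = d' → g a d' (X ω) - g abar d' (X ω) = u₂) :
    efficientScore Y D M X p q F g d d' a ω - efficientScore Y D M X p q F g d d' abar ω
      = treatmentWeight D M X p q d d' ω
          * ((if Y ω ≤ a then 1 else 0) - (if Y ω ≤ abar then 1 else 0) - u₁)
        + controlWeight D X p d' ω * (F a d (M ω) (X ω) - F abar d (M ω) (X ω) - u₂)
        + (g a d' (X ω) - g abar d' (X ω)) := by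
  rcases hω with hω | hω
  · have hω' : D ω ≠ d' := hω ▸ hdd'
    simp only [efficientScore, controlWeight, if_neg hω', ← h₁ hω]
    ring
  · have hω' : D ω ≠ d := hω ▸ hdd'.symm
    simp only [efficientScore, treatmentWeight, if_neg hω', ← h₂ hω]
    ring

theorem abs_treatmentWeight_le {ω : Ω} {ε₁ ε₂ : ℝ} (hε₁ : 0 < ε₁) (hε₂ : 0 < ε₂)
    (hp : ε₁ ≤ p d' (X ω)) (hq : ε₂ ≤ q d (M ω) (X ω)) (hq'0 : 0 ≤ q d' (M ω) (X ω))
    (hq'1 : q d' (M ω) (X ω) ≤ 1 - ε₂) :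
    |treatmentWeight D M X p q d d' ω| ≤ (1 - ε₂) / (ε₁ * ε₂) := by
  have hpq : ε₁ * ε₂ ≤ p d' (X ω) * q d (M ω) (X ω) :=
    mul_le_mul hp hq hε₂.le (hε₁.le.trans hp)
  unfold treatmentWeight
  split_ifs
  · rw [one_mul, abs_of_nonneg (div_nonneg hq'0 ((mul_pos hε₁ hε₂).le.trans hpq))]
    exact div_le_div₀ (hq'0.trans hq'1) hq'1 (by positivity) hpq
  · rw [zero_mul, zero_div, abs_zero]
    exact div_nonneg (hq'0.trans hq'1) (by positivity)

theorem abs_controlWeight_le {ω : Ω} {ε₁ : ℝ} (hε₁ : 0 < ε₁) (hp : ε₁ ≤ p d' (X ω)) :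
    |controlWeight D X p d' ω| ≤ 1 / ε₁ := by
  unfold controlWeight
  split_ifs
  · rw [abs_of_nonneg (one_div_nonneg.mpr (hε₁.le.trans hp))]
    exact one_div_le_one_div_of_le hε₁ hp
  · rw [zero_div, abs_zero]
    positivity

variable [MeasurableSpace 𝓜] [MeasurableSpace 𝓧]

theorem stronglyMeasurable_treatmentWeight (hp : Measurable fun t : ℕ × 𝓧 => p t.1 t.2)
    (hq : Measurable fun t : ℕ × 𝓜 × 𝓧 => q t.1 t.2.1 t.2.2) :
    StronglyMeasurable[MeasurableSpace.comap (fun ω => (D ω, M ω, X ω)) inferInstance]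
      (treatmentWeight D M X p q d d') := by
  have hq' : ∀ δ, Measurable fun t : ℕ × 𝓜 × 𝓧 => q δ t.2.1 t.2.2 :=
    fun δ => hq.comp (measurable_const.prodMk measurable_snd)
  have hp' : Measurable fun t : ℕ × 𝓜 × 𝓧 => p d' t.2.2 :=
    hp.comp (measurable_const.prodMk (measurable_snd.comp measurable_snd))
  exact ((((measurable_const.ite (measurable_fst (measurableSet_singleton d))
    measurable_const).mul (hq' d')).div (hp'.mul (hq' d))).comp
    (comap_measurable _)).stronglyMeasurable

theorem stronglyMeasurable_controlWeight (hp : Measurable fun t : ℕ × 𝓧 => p t.1 t.2) :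
    StronglyMeasurable[MeasurableSpace.comap (fun ω => (D ω, X ω)) inferInstance]
      (controlWeight D X p d') :=
  (((measurable_const.ite (measurable_fst (measurableSet_singleton d')) measurable_const).div
    (hp.comp (measurable_const.prodMk measurable_snd))).comp
    (comap_measurable _)).stronglyMeasurable

end EfficientScore

theorem statement_15_general
    {Ω 𝓜 𝓧 : Type*} [MeasurableSpace Ω]
    [MeasurableSpace 𝓜] [MeasurableSpace 𝓧]
    (P : Measure Ω) [IsProbabilityMeasure P]
    (Y : Ω → ℝ) (D : Ω → ℕ) (M : Ω → 𝓜) (X : Ω → 𝓧)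
    (hY : Measurable Y) (hD : Measurable D) (hM : Measurable M) (hX : Measurable X)
    (hD01 : ∀ ω, D ω ≤ 1)
    (d d' : ℕ) (hd : d ≤ 1) (hd'def : d' = 1 - d)
    -- true nuisance parameters (the outcome models indexed by the threshold)
    (p : ℕ → 𝓧 → ℝ) (q : ℕ → 𝓜 → 𝓧 → ℝ)
    (F : ℝ → ℕ → 𝓜 → 𝓧 → ℝ) (g : ℝ → ℕ → 𝓧 → ℝ)
    (hpmeas : Measurable (fun t : ℕ × 𝓧 => p t.1 t.2))
    (hqmeas : Measurable (fun t : ℕ × 𝓜 × 𝓧 => q t.1 t.2.1 t.2.2))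
    (hFmeas : ∀ a : ℝ, Measurable (fun t : ℕ × 𝓜 × 𝓧 => F a t.1 t.2.1 t.2.2))
    (hgmeas : ∀ a : ℝ, Measurable (fun t : ℕ × 𝓧 => g a t.1 t.2))
    (hpver : ∀ δ ≤ 1, (fun ω => p δ (X ω)) =ᵐ[P]
      P[(fun ω' => if D ω' = δ then (1:ℝ) else 0) | MeasurableSpace.comap X inferInstance])
    (hqver : ∀ δ ≤ 1, (fun ω => q δ (M ω) (X ω)) =ᵐ[P]
      P[(fun ω' => if D ω' = δ then (1:ℝ) else 0) |
        MeasurableSpace.comap (fun ω' => (M ω', X ω')) inferInstance])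
    (hFver : ∀ a : ℝ, (fun ω => F a (D ω) (M ω) (X ω)) =ᵐ[P]
      P[(fun ω' => if Y ω' ≤ a then (1:ℝ) else 0) |
        MeasurableSpace.comap (fun ω' => (D ω', M ω', X ω')) inferInstance])
    (hgver : ∀ a : ℝ, (fun ω => g a (D ω) (X ω)) =ᵐ[P]
      P[(fun ω' => F a d (M ω') (X ω')) |
        MeasurableSpace.comap (fun ω' => (D ω', X ω')) inferInstance])
    -- overlap
    (ε₁ ε₂ : ℝ) (hε₁ : ε₁ ∈ Set.Ioo (0:ℝ) (1/2)) (hε₂ : ε₂ ∈ Set.Ioo (0:ℝ) (1/2))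
    (hoverp : ∀ δ ≤ 1, ∀ᵐ ω ∂P, ε₁ ≤ p δ (X ω) ∧ p δ (X ω) ≤ 1 - ε₁)
    (hoverq : ∀ δ ≤ 1, ∀ᵐ ω ∂P, ε₂ ≤ q δ (M ω) (X ω) ∧ q δ (M ω) (X ω) ≤ 1 - ε₂)
    (a abar : ℝ) :
    eLpNorm (fun ω =>
      ((if D ω = d then (1:ℝ) else 0) * q d' (M ω) (X ω)
          / (p d' (X ω) * q d (M ω) (X ω))
          * ((if Y ω ≤ a then (1:ℝ) else 0) - F a d (M ω) (X ω))
        + (if D ω = d' then (1:ℝ) else 0) / p d' (X ω)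
          * (F a d (M ω) (X ω) - g a d' (X ω))
        + g a d' (X ω))
      - ((if D ω = d then (1:ℝ) else 0) * q d' (M ω) (X ω)
          / (p d' (X ω) * q d (M ω) (X ω))
          * ((if Y ω ≤ abar then (1:ℝ) else 0) - F abar d (M ω) (X ω))
        + (if D ω = d' then (1:ℝ) else 0) / p d' (X ω)
          * (F abar d (M ω) (X ω) - g abar d' (X ω))
        + g abar d' (X ω))) 2 P
      ≤ ENNReal.ofReal (2 * (1 - ε₂) / (ε₁ * ε₂) + 1 / ε₁ + (1 + ε₁) / ε₁)
        * eLpNorm (fun ω =>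
            (if Y ω ≤ a then (1:ℝ) else 0) - (if Y ω ≤ abar then (1:ℝ) else 0)) 2 P := by
  obtain ⟨hε₁0, hε₁1⟩ := hε₁
  obtain ⟨hε₂0, -⟩ := hε₂
  have hd' : d' ≤ 1 := by omega
  set Z₁ : Ω → ℕ × 𝓜 × 𝓧 := fun ω => (D ω, M ω, X ω)
  set Z₂ : Ω → 𝓜 × 𝓧 := fun ω => (M ω, X ω)
  set Z₃ : Ω → ℕ × 𝓧 := fun ω => (D ω, X ω)
  have hZ₁ : Measurable Z₁ := hD.prodMk (hM.prodMk hX)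
  have hZ₂ : Measurable Z₂ := hM.prodMk hX
  have hZ₃ : Measurable Z₃ := hD.prodMk hX
  set A : Set Ω := {ω | D ω = d}
  set B : Set Ω := {ω | D ω = d'}
  have hA : MeasurableSet[.comap Z₁ inferInstance] A :=
    ⟨_, measurable_fst (measurableSet_singleton d), rfl⟩
  have hB : MeasurableSet[.comap Z₃ inferInstance] B :=
    ⟨_, measurable_fst (measurableSet_singleton d'), rfl⟩
  have hεA : ∀ᵐ ω ∂P, ε₂ ≤ P[A.indicator 1|.comap Z₂ inferInstance] ω :=
    ae_le_condExp_indicator_of_ae_eq (hqver d hd) ((hoverq d hd).mono fun _ h => h.1)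
  have hεB : ∀ᵐ ω ∂P, ε₁ ≤ P[B.indicator 1|.comap X inferInstance] ω :=
    ae_le_condExp_indicator_of_ae_eq (hpver d' hd') ((hoverp d' hd').mono fun _ h => h.1)
  have hYt : ∀ t : ℝ, ∀ ω, |(if Y ω ≤ t then (1 : ℝ) else 0)| ≤ 1 :=
    fun t ω => by split_ifs <;> simp
  have hYL2 : ∀ t : ℝ, MemLp (fun ω => if Y ω ≤ t then (1 : ℝ) else 0) 2 P := fun t =>
    .of_bound (measurable_const.ite (hY measurableSet_Iic) measurable_const).aestronglyMeasurable
      1 (ae_of_all _ (hYt t))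
  have hFm : ∀ t, StronglyMeasurable[.comap Z₂ inferInstance] fun ω => F t d (M ω) (X ω) :=
    fun t => (((hFmeas t).comp (measurable_const.prodMk measurable_id)).comp
      (comap_measurable Z₂)).stronglyMeasurable
  have hgm : ∀ t, StronglyMeasurable[.comap X inferInstance] fun ω => g t d' (X ω) :=
    fun t => (((hgmeas t).comp (measurable_const.prodMk measurable_id)).comp
      (comap_measurable X)).stronglyMeasurable
  have hFA : ∀ t, ∀ᵐ ω ∂P, ω ∈ A → F t d (M ω) (X ω)
      = P[fun ω => if Y ω ≤ t then (1 : ℝ) else 0|.comap Z₁ inferInstance] ω := fun t => by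
    filter_upwards [hFver t] with ω hω (hωA : D ω = d)
    rw [← hω, hωA]
  have hgB : ∀ t, ∀ᵐ ω ∂P, ω ∈ B → g t d' (X ω)
      = P[fun ω => F t d (M ω) (X ω)|.comap Z₃ inferInstance] ω := fun t => by
    filter_upwards [hgver t] with ω hω (hωB : D ω = d')
    rw [← hω, hωB]
  have hFbdd : ∀ t, ∀ᵐ ω ∂P, |F t d (M ω) (X ω)| ≤ 1 := fun t =>
    ae_abs_le_of_ae_eq_condExp_on hZ₂.comap_le (hZ₁.comap_le _ hA) hε₂0 hεA (hFm t)
      (ae_of_all _ (hYt t)) (hFA t)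
  have hFL2 : ∀ t, MemLp (fun ω => F t d (M ω) (X ω)) 2 P := fun t =>
    .of_bound ((hFm t).mono hZ₂.comap_le).aestronglyMeasurable 1 (hFbdd t)
  have hgL2 : ∀ t, MemLp (fun ω => g t d' (X ω)) 2 P := fun t =>
    .of_bound ((hgm t).mono hX.comap_le).aestronglyMeasurable 1
      (ae_abs_le_of_ae_eq_condExp_on hX.comap_le (hZ₃.comap_le _ hB) hε₁0 hεB (hgm t)
        (hFbdd t) (hgB t))
  have hΔFA := ae_imp_sub_eq_condExp_sub (hFA a) (hFA abar) ((hYL2 a).integrable one_le_two)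
    ((hYL2 abar).integrable one_le_two)
  have hΔgB := ae_imp_sub_eq_condExp_sub (hgB a) (hgB abar) ((hFL2 a).integrable one_le_two)
    ((hFL2 abar).integrable one_le_two)
  have hW₁C : ∀ᵐ ω ∂P, |treatmentWeight D M X p q d d' ω| ≤ (1 - ε₂) / (ε₁ * ε₂) := by
    filter_upwards [hoverp d' hd', hoverq d hd, hoverq d' hd'] with ω hp hq hq'
    exact abs_treatmentWeight_le hε₁0 hε₂0 hp.1 hq.1 (hε₂0.le.trans hq'.1) hq'.2
  have hW₂C : ∀ᵐ ω ∂P, |controlWeight D X p d' ω| ≤ 1 / ε₁ := by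
    filter_upwards [hoverp d' hd'] with ω hp
    exact abs_controlWeight_le hε₁0 hp.1
  change eLpNorm (efficientScore Y D M X p q F g d d' a - efficientScore Y D M X p q F g d d' abar)
    2 P ≤ _
  refine (eLpNorm_congr_ae ?_).trans_le ((eLpNorm_nested_residuals_le hZ₁.comap_le
    hZ₂.comap_le hZ₃.comap_le hX.comap_le hA hB hε₁0 hε₂0 hεA hεB ((hYL2 a).sub (hYL2 abar))
    ((hFm a).sub (hFm abar)) ((hFL2 a).sub (hFL2 abar)) hΔFA ((hgm a).sub (hgm abar))
    ((hgL2 a).sub (hgL2 abar)) hΔgB (stronglyMeasurable_treatmentWeight hpmeas hqmeas)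
    (stronglyMeasurable_controlWeight hpmeas) hW₁C hW₂C).trans ?_)
  · filter_upwards [hΔFA, hΔgB] with ω hω₁ hω₂
    have := hD01 ω
    exact efficientScore_sub_efficientScore (by omega) (by omega) hω₁ hω₂
  · gcongr ENNReal.ofReal ?_ * _
    exact score_constant_le hε₁0 (by linarith) hε₂0

/-- Smoothness of the efficient score in the threshold `a` (case `d ≠ d'`):
for all thresholds `a, ā ∈ ℝ`,
`‖ψ_{d,d',a} − ψ_{d,d',ā}‖_{P,2} ≤ (2(1−ε₂)/(ε₁ε₂) + 1/ε₁ + (1+ε₁)/ε₁)·‖Y_a − Y_ā‖_{P,2}`. -/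
theorem statement_15
    {Ω 𝓜 𝓧 : Type*} [MeasurableSpace Ω]
    [MeasurableSpace 𝓜] [Countable 𝓜] [MeasurableSingletonClass 𝓜] [MeasurableSpace 𝓧]
    (P : Measure Ω) [IsProbabilityMeasure P]
    (Y : Ω → ℝ) (D : Ω → ℕ) (M : Ω → 𝓜) (X : Ω → 𝓧)
    (hY : Measurable Y) (hD : Measurable D) (hM : Measurable M) (hX : Measurable X)
    (hD01 : ∀ ω, D ω ≤ 1)
    (d d' : ℕ) (hd : d ≤ 1) (hd'def : d' = 1 - d)
    -- true nuisance parameters (the outcome models indexed by the threshold)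
    (p : ℕ → 𝓧 → ℝ) (q : ℕ → 𝓜 → 𝓧 → ℝ)
    (F : ℝ → ℕ → 𝓜 → 𝓧 → ℝ) (g : ℝ → ℕ → 𝓧 → ℝ)
    (hpmeas : Measurable (fun t : ℕ × 𝓧 => p t.1 t.2))
    (hqmeas : Measurable (fun t : ℕ × 𝓜 × 𝓧 => q t.1 t.2.1 t.2.2))
    (hFmeas : ∀ a : ℝ, Measurable (fun t : ℕ × 𝓜 × 𝓧 => F a t.1 t.2.1 t.2.2))
    (hgmeas : ∀ a : ℝ, Measurable (fun t : ℕ × 𝓧 => g a t.1 t.2))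
    (hpver : ∀ δ ≤ 1, (fun ω => p δ (X ω)) =ᵐ[P]
      P[(fun ω' => if D ω' = δ then (1:ℝ) else 0) | MeasurableSpace.comap X inferInstance])
    (hqver : ∀ δ ≤ 1, (fun ω => q δ (M ω) (X ω)) =ᵐ[P]
      P[(fun ω' => if D ω' = δ then (1:ℝ) else 0) |
        MeasurableSpace.comap (fun ω' => (M ω', X ω')) inferInstance])
    (hFver : ∀ a : ℝ, (fun ω => F a (D ω) (M ω) (X ω)) =ᵐ[P]
      P[(fun ω' => if Y ω' ≤ a then (1:ℝ) else 0) |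
        MeasurableSpace.comap (fun ω' => (D ω', M ω', X ω')) inferInstance])
    (hgver : ∀ a : ℝ, (fun ω => g a (D ω) (X ω)) =ᵐ[P]
      P[(fun ω' => F a d (M ω') (X ω')) |
        MeasurableSpace.comap (fun ω' => (D ω', X ω')) inferInstance])
    -- overlap
    (ε₁ ε₂ : ℝ) (hε₁ : ε₁ ∈ Set.Ioo (0:ℝ) (1/2)) (hε₂ : ε₂ ∈ Set.Ioo (0:ℝ) (1/2))
    (hoverp : ∀ δ ≤ 1, ∀ᵐ ω ∂P, ε₁ ≤ p δ (X ω) ∧ p δ (X ω) ≤ 1 - ε₁)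
    (hoverq : ∀ δ ≤ 1, ∀ᵐ ω ∂P, ε₂ ≤ q δ (M ω) (X ω) ∧ q δ (M ω) (X ω) ≤ 1 - ε₂)
    (a abar : ℝ) :
    eLpNorm (fun ω =>
      ((if D ω = d then (1:ℝ) else 0) * q d' (M ω) (X ω)
          / (p d' (X ω) * q d (M ω) (X ω))
          * ((if Y ω ≤ a then (1:ℝ) else 0) - F a d (M ω) (X ω))
        + (if D ω = d' then (1:ℝ) else 0) / p d' (X ω)
          * (F a d (M ω) (X ω) - g a d' (X ω))
        + g a d' (X ω))
      - ((if D ω = d then (1:ℝ) else 0) * q d' (M ω) (X ω)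
          / (p d' (X ω) * q d (M ω) (X ω))
          * ((if Y ω ≤ abar then (1:ℝ) else 0) - F abar d (M ω) (X ω))
        + (if D ω = d' then (1:ℝ) else 0) / p d' (X ω)
          * (F abar d (M ω) (X ω) - g abar d' (X ω))
        + g abar d' (X ω))) 2 P
      ≤ ENNReal.ofReal (2 * (1 - ε₂) / (ε₁ * ε₂) + 1 / ε₁ + (1 + ε₁) / ε₁)
        * eLpNorm (fun ω =>
            (if Y ω ≤ a then (1:ℝ) else 0) - (if Y ω ≤ abar then (1:ℝ) else 0)) 2 P :=
  statement_15_general P Y D M X hY hD hM hX hD01 d d' hd hd'def p q F g hpmeas hqmeas hFmeas hgmeas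
    hpver hqver hFver hgver ε₁ ε₂ hε₁ hε₂ hoverp hoverq a abar
end
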